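/- arXiv:2511.22932 — 2 statements merged into one kernel-verified Lean document; each statement's English description precedes it below -/
import Mathlib

section
/- (Existence of traveling waves, sufficiency.) Assume the Fisher-KPP conditions and hypothesis (H). Then for every c ≥ c*(α) there exists a nondecreasing traveling wave U with speed c, i.e., a continuously differentiable nondecreasing U : ℝ → [0,1] with c·U′(ξ) = (1/6)·𝒟_h[U](ξ) + f(U(ξ)) for all ξ, lim_{ξ→−∞} U(ξ) = 0 and lim_{ξ→+∞} U(ξ) = 1. -/
open Real Set Filter

noncomputable def delta1 (α : ℝ) : ℝ := Real.cos α
noncomputable def delta2 (α : ℝ) : ℝ := (1/2) * Real.cos α + (Real.sqrt 3 / 2) * Real.sin α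
noncomputable def delta3 (α : ℝ) : ℝ := (1/2) * Real.cos α - (Real.sqrt 3 / 2) * Real.sin α

/-- The function g_α(λ) from the minimal wave speed formula, with `a` playing the role of f'(0). -/
noncomputable def gfun (a α l : ℝ) : ℝ :=
  (1/6) * ((Real.exp (l * delta1 α) + Real.exp (-(l * delta1 α)))
    + (Real.exp (l * delta2 α) + Real.exp (-(l * delta2 α)))
    + (Real.exp (l * delta3 α) + Real.exp (-(l * delta3 α)))) - 1 + a

/-- The minimal wave speed c*(α) = inf_{λ>0} g_α(λ)/λ. -/
noncomputable def cstar (a α : ℝ) : ℝ := sInf {c : ℝ | ∃ l : ℝ, 0 < l ∧ c = gfun a α l / l}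

/-- The discrete diffusion operator on the hexagonal lattice, in direction α. -/
noncomputable def Dh (α : ℝ) (U : ℝ → ℝ) (ξ : ℝ) : ℝ :=
  (U (ξ + delta1 α) + U (ξ - delta1 α)) + (U (ξ + delta2 α) + U (ξ - delta2 α))
    + (U (ξ + delta3 α) + U (ξ - delta3 α)) - 6 * U ξ

/-- Fisher-KPP conditions: f is C¹ on [0,1] with derivative f', f(0)=f(1)=0, f'(0)>0,
and 0 < f(s) ≤ f'(0)·s on (0,1). -/
def FisherKPP (f f' : ℝ → ℝ) : Prop :=
  (∀ s ∈ Set.Icc (0:ℝ) 1, HasDerivAt f (f' s) s) ∧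
  ContinuousOn f' (Set.Icc (0:ℝ) 1) ∧
  f 0 = 0 ∧ f 1 = 0 ∧ 0 < f' 0 ∧
  (∀ s ∈ Set.Ioo (0:ℝ) 1, 0 < f s ∧ f s ≤ f' 0 * s)

/-- A traveling wave with speed c: a C¹ function U : ℝ → [0,1] solving
c·U′ = (1/6)·𝒟_h[U] + f(U) with limits 0 at −∞ and 1 at +∞. -/
def IsTravelingWave (α : ℝ) (f : ℝ → ℝ) (c : ℝ) (U : ℝ → ℝ) : Prop :=
  ContDiff ℝ 1 U ∧ (∀ ξ, U ξ ∈ Set.Icc (0:ℝ) 1) ∧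
  (∀ ξ, c * deriv U ξ = (1/6) * Dh α U ξ + f (U ξ)) ∧
  Filter.Tendsto U Filter.atBot (nhds 0) ∧ Filter.Tendsto U Filter.atTop (nhds 1)


/-!
Monotone iteration. Adding `(K + 1) U` to both sides, with `K` a Lipschitz constant of `f` on
`[0, 1]`, turns the wave equation into `c U' + (K + 1) U = H[U]` with `H` order-preserving; its
solutions bounded at `-∞` are the fixed points of
`T V (ξ) = (1/c) ∫_{-∞}^ξ e^{-(K+1)(ξ-s)/c} H[V](s) ds`,
and `T` preserves order, monotonicity and the range `[0, 1]`.

For `c > c*` the equation `g(λ) = cλ` has a root `λ > 0`, and by convexity of `g` there is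
`ν ∈ (λ, (1 + θ)λ]` with `g(ν) < cν`. Then `min 1 (e^{λξ})` is an upper solution (by the KPP
bound `f(s) ≤ f'(0) s`) and `max 0 (e^{λξ} - q e^{νξ})` is a lower solution for large `q` (by
(H), since `s^{1+θ} ≤ e^{νξ}` there). Iterating `T` from the upper solution gives a decreasing
sequence of monotone functions squeezed above the lower solution, whose limit is a fixed point
of `T`. A monotone wave profile has zeros of `f` as limits at `±∞`, and the two bounds force them
to be `0` and `1`.

For `c = c*`, waves of speeds `c* + 1/(n+1)`, translated so that `Uₙ(0) = 1/2`, are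
equi-Lipschitz; a limit along an ultrafilter is uniform on compacts, so it solves the integrated
equation with speed `c*` and is again a normalized monotone wave.
-/

open Topology MeasureTheory

section RealAnalysis

lemma monotone_of_hasDerivAt_nonneg_of_ne {φ : ℝ → ℝ} {p : ℝ} (hφ : Continuous φ)
    (hd : ∀ t ≠ p, ∃ d, HasDerivAt φ d t ∧ 0 ≤ d) : Monotone φ := by
  have key : ∀ D : Set ℝ, Convex ℝ D → p ∉ interior D → MonotoneOn φ D := fun D hD hp =>
    monotoneOn_of_deriv_nonneg hD hφ.continuousOn
      (fun t ht => (hd t (ne_of_mem_of_not_mem ht hp)).choose_spec.1.differentiableAt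
        |>.differentiableWithinAt)
      fun t ht => by
        obtain ⟨d, hdt, hd0⟩ := hd t (ne_of_mem_of_not_mem ht hp)
        rwa [hdt.deriv]
  exact MonotoneOn.Iic_union_Ici (key _ (convex_Iic p) (by simp)) (key _ (convex_Ici p) (by simp))

lemma abs_sub_le_of_abs_deriv_le {φ φ' : ℝ → ℝ} {C : ℝ} (hd : ∀ t, HasDerivAt φ (φ' t) t)
    (hC : ∀ t, |φ' t| ≤ C) (s t : ℝ) : |φ s - φ t| ≤ C * |s - t| := by
  simpa [Real.norm_eq_abs] using convex_univ.norm_image_sub_le_of_norm_hasDerivWithin_le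
    (fun u _ => (hd u).hasDerivWithinAt) (fun u _ => by simpa using hC u) (mem_univ t) (mem_univ s)

lemma continuous_of_abs_sub_le {φ : ℝ → ℝ} {C : ℝ} (h : ∀ s t, |φ s - φ t| ≤ C * |s - t|) :
    Continuous φ :=
  (LipschitzWith.of_dist_le_mul (K := C.toNNReal) fun s t => by
    simpa [Real.dist_eq] using (h s t).trans
      (mul_le_mul_of_nonneg_right (le_max_left C 0) (abs_nonneg _))).continuous

lemma abs_sub_le_of_tendsto {ι : Type*} {l : Filter ι} [l.NeBot] {F : ι → ℝ → ℝ} {G : ℝ → ℝ}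
    {C : ℝ} (hF : ∀ i s t, |F i s - F i t| ≤ C * |s - t|)
    (hFG : ∀ t, Tendsto (fun i => F i t) l (𝓝 (G t))) (s t : ℝ) :
    |G s - G t| ≤ C * |s - t| :=
  le_of_tendsto ((hFG s).sub (hFG t)).abs (Eventually.of_forall fun i => hF i s t)

lemma tendstoUniformlyOn_of_abs_sub_le {ι : Type*} {l : Filter ι} {F : ι → ℝ → ℝ} {G : ℝ → ℝ}
    {C : ℝ} (hF : ∀ i s t, |F i s - F i t| ≤ C * |s - t|)
    (hFG : ∀ t, Tendsto (fun i => F i t) l (𝓝 (G t))) {K : Set ℝ} (hK : IsCompact K) :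
    TendstoUniformlyOn F G l K := by
  have hF : Equicontinuous F :=
    Metric.equicontinuous_of_continuity_modulus (C * ·)
      (by simpa using (continuous_const_mul C).tendsto 0) F
      fun x y i => by simpa [Real.dist_eq] using hF i x y
  have := (EquicontinuousOn.tendsto_uniformOnFun_iff_pi (𝔖 := {K | IsCompact K}) (fun _ => id)
    (sUnion_eq_univ_iff.2 fun x => ⟨{x}, isCompact_singleton, rfl⟩)
    (fun K _ => hF.equicontinuousOn K) l G).2 (tendsto_pi_nhds.2 hFG)
  exact UniformOnFun.tendsto_iff_tendstoUniformlyOn.1 this K hK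

lemma TendstoUniformlyOn.tendsto_intervalIntegral {ι : Type*} {l : Filter ι} {F : ι → ℝ → ℝ}
    {G : ℝ → ℝ} {x y : ℝ} (hF : ∀ i, IntervalIntegrable (F i) volume x y)
    (hG : IntervalIntegrable G volume x y) (h : TendstoUniformlyOn F G l (uIcc x y)) :
    Tendsto (fun i => ∫ t in x..y, F i t) l (𝓝 (∫ t in x..y, G t)) := by
  rw [Metric.tendsto_nhds]
  intro ε hε
  set δ := ε / (|y - x| + 1)
  filter_upwards [Metric.tendstoUniformlyOn_iff.1 h δ (by positivity)] with i hi
  have hb : ∀ t ∈ uIoc x y, ‖F i t - G t‖ ≤ δ := fun t ht => by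
    simpa [Real.dist_eq, abs_sub_comm] using (hi t (uIoc_subset_uIcc ht)).le
  rw [Real.dist_eq, ← intervalIntegral.integral_sub (hF i) hG]
  calc |∫ t in x..y, (F i t - G t)| ≤ δ * |y - x| :=
        intervalIntegral.norm_integral_le_of_norm_le_const hb
    _ < ε := by
      rw [div_mul_eq_mul_div, div_lt_iff₀ (by positivity)]
      nlinarith [abs_nonneg (y - x)]

lemma exists_tendsto_ultrafilter_of_mem_Icc {ι : Type*} (𝒰 : Ultrafilter ι) {u : ι → ℝ}
    {a b : ℝ} (hu : ∀ i, u i ∈ Icc a b) : ∃ x ∈ Icc a b, Tendsto u 𝒰 (𝓝 x) :=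
  isCompact_Icc.ultrafilter_le_nhds' (𝒰.map u) (Filter.mem_map.2 (univ_mem' hu))

lemma hasDerivAt_setIntegral_Iic {G : ℝ → ℝ} (hG : Continuous G)
    (hint : ∀ x, IntegrableOn G (Iic x)) (ξ : ℝ) :
    HasDerivAt (fun x => ∫ s in Iic x, G s) (G ξ) ξ := by
  refine ((intervalIntegral.integral_hasDerivAt_right (hG.intervalIntegrable 0 ξ)
    (hG.stronglyMeasurableAtFilter _ _) hG.continuousAt).const_add
    (∫ s in Iic 0, G s)).congr_of_eventuallyEq (Eventually.of_forall fun x => ?_)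
  linarith [intervalIntegral.integral_Iic_sub_Iic (hint 0) (hint x)]

lemma hasDerivAt_of_sub_eq_integral {U G : ℝ → ℝ} (hG : Continuous G) {x₀ : ℝ}
    (h : ∀ y, U y - U x₀ = ∫ t in x₀..y, G t) (ξ : ℝ) : HasDerivAt U (G ξ) ξ :=
  ((intervalIntegral.integral_hasDerivAt_right (hG.intervalIntegrable x₀ ξ)
    (hG.stronglyMeasurableAtFilter _ _) hG.continuousAt).const_add (U x₀)).congr_of_eventuallyEq
    (Eventually.of_forall fun y => by simp only [← h]; ring)

lemma nonpos_of_tendsto_deriv_atTop {U U' : ℝ → ℝ} {κ : ℝ} (hU : ∀ x, HasDerivAt U (U' x) x)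
    (hb : BddAbove (range U)) (h : Tendsto U' atTop (𝓝 κ)) : κ ≤ 0 := by
  by_contra! hκ
  obtain ⟨M, hM⟩ := eventually_atTop.1 (h.eventually (lt_mem_nhds (half_lt_self hκ)))
  have hmono : MonotoneOn (fun t => U t - κ / 2 * t) (Ici M) := by
    refine monotoneOn_of_hasDerivWithinAt_nonneg (convex_Ici M) (f' := fun t => U' t - κ / 2)
      ?_ (fun t _ => ((hU t).sub ((hasDerivAt_id t).const_mul (κ / 2))).hasDerivWithinAt.congr_deriv
        (by ring)) fun t ht => ?_
    · exact (continuous_iff_continuousAt.2 fun t => (hU t).continuousAt).continuousOn.sub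
        (continuous_const.mul continuous_id).continuousOn
    · rw [interior_Ici] at ht; linarith [hM t (le_of_lt ht)]
  refine not_bddAbove_of_tendsto_atTop (l := atTop) ?_ hb
  refine tendsto_atTop_mono' atTop (eventually_atTop.2 ⟨M, fun t ht => ?_⟩)
    (tendsto_atTop_add_const_left _ (U M - κ / 2 * M) (tendsto_id.const_mul_atTop (half_pos hκ)))
  have := hmono self_mem_Ici ht ht
  simp only [id] at this ⊢; linarith

lemma nonpos_of_tendsto_deriv_atBot {U U' : ℝ → ℝ} {κ : ℝ} (hU : ∀ x, HasDerivAt U (U' x) x)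
    (hb : BddBelow (range U)) (h : Tendsto U' atBot (𝓝 κ)) : κ ≤ 0 := by
  refine nonpos_of_tendsto_deriv_atTop (U := fun x => -U (-x)) (U' := fun x => U' (-x))
    (fun x => ?_) ?_ (h.comp tendsto_neg_atTop_atBot)
  · have h : HasDerivAt (fun y => U (-y)) (U' (-x) * -1) x := (hU (-x)).comp x (hasDerivAt_neg x)
    exact h.neg.congr_deriv (by ring)
  · obtain ⟨B, hB⟩ := hb
    exact ⟨-B, by rintro _ ⟨x, rfl⟩; simpa using hB ⟨-x, rfl⟩⟩

lemma hasDerivAt_exp_const_mul (b ξ : ℝ) :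
    HasDerivAt (fun x => exp (b * x)) (b * exp (b * ξ)) ξ := by
  simpa [mul_comm] using ((hasDerivAt_id ξ).const_mul b).exp

lemma two_add_sq_div_two_le_exp_add_exp_neg (x : ℝ) : 2 + x ^ 2 / 2 ≤ exp x + exp (-x) := by
  wlog hx : 0 ≤ x generalizing x
  · simpa [add_comm] using this (-x) (by linarith)
  linarith [quadratic_le_exp_of_nonneg hx, add_one_le_exp (-x)]

lemma ConvexOn.lt_mul_of_mem_Ioo {h : ℝ → ℝ} (hh : ConvexOn ℝ univ h) {c x y z : ℝ}
    (hx : h x ≤ c * x) (hy : h y < c * y) (hz : z ∈ Ioo x y) : h z < c * z := by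
  rw [← openSegment_eq_Ioo (hz.1.trans hz.2)] at hz
  obtain ⟨p, q, hp, hq, hpq, rfl⟩ := hz
  calc h (p • x + q • y) ≤ p • h x + q • h y := hh.2 trivial trivial hp.le hq.le hpq
    _ < c * (p • x + q • y) := by simp only [smul_eq_mul]; nlinarith

end RealAnalysis

section SpeedFunction

lemma delta_sq_sum (α : ℝ) : delta1 α ^ 2 + delta2 α ^ 2 + delta3 α ^ 2 = 3 / 2 := by
  simp only [delta1, delta2, delta3]
  nlinarith [sin_sq_add_cos_sq α, sq_sqrt (show (0:ℝ) ≤ 3 by norm_num)]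

lemma add_sq_div_eight_le_gfun (a α l : ℝ) : a + l ^ 2 / 8 ≤ gfun a α l := by
  have h1 := two_add_sq_div_two_le_exp_add_exp_neg (l * delta1 α)
  have h2 := two_add_sq_div_two_le_exp_add_exp_neg (l * delta2 α)
  have h3 := two_add_sq_div_two_le_exp_add_exp_neg (l * delta3 α)
  have := delta_sq_sum α
  simp only [gfun]
  nlinarith

lemma continuous_gfun (a α : ℝ) : Continuous (gfun a α) := by
  unfold gfun; fun_prop

lemma convexOn_gfun (a α : ℝ) : ConvexOn ℝ univ (gfun a α) := by
  have hexp : ∀ d : ℝ, ConvexOn ℝ univ fun l : ℝ => exp (l * d) := fun d =>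
    convexOn_exp.comp_linearMap (LinearMap.id.smulRight d)
  have hcosh : ∀ d : ℝ, ConvexOn ℝ univ fun l : ℝ => exp (l * d) + exp (-(l * d)) := fun d =>
    (hexp d).add (by simpa [mul_neg] using hexp (-d))
  refine (((((hcosh (delta1 α)).add (hcosh (delta2 α))).add (hcosh (delta3 α))).smul
    (by norm_num : (0:ℝ) ≤ 1 / 6)).add_const (a - 1)).congr fun l _ => ?_
  simp only [gfun, smul_eq_mul, Pi.add_apply]; ring

lemma cstar_pos {a : ℝ} (ha : 0 < a) (α : ℝ) : 0 < cstar a α := by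
  refine lt_of_lt_of_le (lt_min ha (by norm_num : (0:ℝ) < 1 / 8))
    (le_csInf (s := {c | ∃ l, 0 < l ∧ c = gfun a α l / l}) ⟨_, 1, one_pos, rfl⟩ ?_)
  rintro _ ⟨l, hl, rfl⟩
  have hg := add_sq_div_eight_le_gfun a α l
  rw [le_div_iff₀ hl]
  rcases le_total l 1 with h | h
  · nlinarith [min_le_left a (1 / 8)]
  · nlinarith [min_le_right a (1 / 8)]

lemma exists_lt_mul_of_cstar_lt {a α c : ℝ} (hc : cstar a α < c) :
    ∃ μ, 0 < μ ∧ gfun a α μ < c * μ := by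
  obtain ⟨_, ⟨μ, hμ, rfl⟩, hlt⟩ := exists_lt_of_csInf_lt
    (s := {c | ∃ l, 0 < l ∧ c = gfun a α l / l}) ⟨_, 1, one_pos, rfl⟩ hc
  exact ⟨μ, hμ, (div_lt_iff₀ hμ).1 hlt⟩

lemma exists_root_and_slack {a α c θ : ℝ} (ha : 0 < a) (hθ : 0 < θ) (hc : cstar a α < c) :
    ∃ lam ν : ℝ, 0 < lam ∧ gfun a α lam = c * lam ∧ lam < ν ∧ ν ≤ (1 + θ) * lam ∧
      gfun a α ν < c * ν := by
  obtain ⟨μ, hμ, hμc⟩ := exists_lt_mul_of_cstar_lt hc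
  have hg0 : gfun a α 0 = a := by simp [gfun]; norm_num
  obtain ⟨lam, ⟨hlam0, hlamμ⟩, hlam⟩ := intermediate_value_Icc' hμ.le
    ((continuous_gfun a α).sub (continuous_const_mul c)).continuousOn
    (show (0:ℝ) ∈ Icc (gfun a α μ - c * μ) (gfun a α 0 - c * 0) by
      rw [hg0]; constructor <;> linarith)
  have hroot : gfun a α lam = c * lam := sub_eq_zero.1 hlam
  have hlam0 : 0 < lam := hlam0.lt_of_ne (by rintro rfl; rw [hg0] at hroot; linarith)
  have hlamμ : lam < μ := hlamμ.lt_of_ne (by rintro rfl; linarith)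
  refine ⟨lam, min ((lam + μ) / 2) ((1 + θ) * lam), hlam0, hroot,
    lt_min (by linarith) (by nlinarith), min_le_right _ _,
    (convexOn_gfun a α).lt_mul_of_mem_Ioo hroot.le hμc ⟨lt_min (by linarith) (by nlinarith), ?_⟩⟩
  exact (min_le_left _ _).trans_lt (by linarith)

end SpeedFunction

namespace FisherKPP

variable {f f' : ℝ → ℝ}

lemma map_zero (hf : FisherKPP f f') : f 0 = 0 := hf.2.2.1

lemma map_one (hf : FisherKPP f f') : f 1 = 0 := hf.2.2.2.1

lemma deriv_zero_pos (hf : FisherKPP f f') : 0 < f' 0 := hf.2.2.2.2.1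

lemma continuousOn (hf : FisherKPP f f') : ContinuousOn f (Icc 0 1) :=
  fun s hs => (hf.1 s hs).continuousAt.continuousWithinAt

lemma nonneg (hf : FisherKPP f f') {s : ℝ} (hs : s ∈ Icc 0 1) : 0 ≤ f s := by
  rcases hs.1.eq_or_lt with rfl | h0
  · exact hf.map_zero.ge
  rcases hs.2.eq_or_lt with rfl | h1
  · exact hf.map_one.ge
  exact (hf.2.2.2.2.2 s ⟨h0, h1⟩).1.le

lemma eq_zero_or_eq_one (hf : FisherKPP f f') {s : ℝ} (hs : s ∈ Icc 0 1) (h : f s = 0) :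
    s = 0 ∨ s = 1 := by
  by_contra! hne
  exact (hf.2.2.2.2.2 s ⟨hs.1.lt_of_ne hne.1.symm, hs.2.lt_of_ne hne.2⟩).1.ne' h

lemma le_mul (hf : FisherKPP f f') {s : ℝ} (hs : s ∈ Icc 0 1) : f s ≤ f' 0 * s := by
  rcases hs.1.eq_or_lt with rfl | h0
  · simp [hf.map_zero]
  rcases hs.2.eq_or_lt with rfl | h1
  · simpa [hf.map_one] using hf.deriv_zero_pos.le
  exact (hf.2.2.2.2.2 s ⟨h0, h1⟩).2

lemma abs_le_deriv_zero (hf : FisherKPP f f') {s : ℝ} (hs : s ∈ Icc 0 1) : |f s| ≤ f' 0 :=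
  (abs_of_nonneg (hf.nonneg hs)).trans_le
    ((hf.le_mul hs).trans (mul_le_of_le_one_right hf.deriv_zero_pos.le hs.2))

lemma exists_lipschitz (hf : FisherKPP f f') :
    ∃ K, ∀ u ∈ Icc (0:ℝ) 1, ∀ v ∈ Icc (0:ℝ) 1, |f u - f v| ≤ K * |u - v| := by
  obtain ⟨K, hK⟩ := isCompact_Icc.exists_bound_of_continuousOn hf.2.1
  exact ⟨K, fun u hu v hv => by
    simpa [Real.norm_eq_abs] using (convex_Icc (0:ℝ) 1).norm_image_sub_le_of_norm_hasDerivWithin_le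
      (fun s hs => (hf.1 s hs).hasDerivWithinAt) hK hv hu⟩

end FisherKPP

lemma monotoneOn_mul_add_of_abs_sub_le {f : ℝ → ℝ} {K : ℝ} {S : Set ℝ}
    (h : ∀ u ∈ S, ∀ v ∈ S, |f u - f v| ≤ K * |u - v|) : MonotoneOn (fun s => K * s + f s) S :=
  fun u hu v hv huv => by
    have := (abs_le.1 (h u hu v hv)).2
    rw [abs_of_nonpos (by linarith)] at this
    simp only; linarith

section DiscreteDiffusion

variable {α : ℝ}

lemma Dh_comp_add_const (U : ℝ → ℝ) (b ξ : ℝ) : Dh α (fun x => U (x + b)) ξ = Dh α U (ξ + b) := by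
  simp only [Dh, add_right_comm _ b, sub_add_eq_add_sub]

lemma Dh_const (s ξ : ℝ) : Dh α (fun _ => s) ξ = 0 := by
  simp only [Dh]; ring

lemma continuous_Dh {U : ℝ → ℝ} (hU : Continuous U) : Continuous (Dh α U) := by
  unfold Dh; fun_prop

lemma Dh_le_Dh {U V : ℝ → ℝ} {ξ : ℝ} (h : ∀ x, U x ≤ V x) (hξ : U ξ = V ξ) :
    Dh α U ξ ≤ Dh α V ξ := by
  simp only [Dh, hξ]
  linarith [h (ξ + delta1 α), h (ξ - delta1 α), h (ξ + delta2 α), h (ξ - delta2 α),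
    h (ξ + delta3 α), h (ξ - delta3 α)]

lemma abs_Dh_le {U : ℝ → ℝ} (hU : ∀ x, U x ∈ Icc (0:ℝ) 1) (ξ : ℝ) : |Dh α U ξ| ≤ 6 := by
  have h := fun x => (hU x).1
  have h' := fun x => (hU x).2
  simp only [Dh, abs_le]
  constructor <;> linarith [h (ξ + delta1 α), h (ξ - delta1 α), h (ξ + delta2 α),
    h (ξ - delta2 α), h (ξ + delta3 α), h (ξ - delta3 α), h' (ξ + delta1 α), h' (ξ - delta1 α),
    h' (ξ + delta2 α), h' (ξ - delta2 α), h' (ξ + delta3 α), h' (ξ - delta3 α), h ξ, h' ξ]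

lemma abs_Dh_sub_Dh_le {U : ℝ → ℝ} {L : ℝ} (hU : ∀ s t, |U s - U t| ≤ L * |s - t|) (s t : ℝ) :
    |Dh α U s - Dh α U t| ≤ 12 * L * |s - t| := by
  have hp := fun d => abs_le.1 (by simpa using hU (s + d) (t + d))
  have hm := fun d => abs_le.1 (by simpa using hU (s - d) (t - d))
  have h0 := abs_le.1 (hU s t)
  simp only [Dh, abs_le]
  constructor <;> linarith [hp (delta1 α), hp (delta2 α), hp (delta3 α), hm (delta1 α),
    hm (delta2 α), hm (delta3 α)]

lemma tendsto_Dh {ι : Type*} {l : Filter ι} {U : ι → ℝ → ℝ} {V : ℝ → ℝ}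
    (h : ∀ x, Tendsto (fun i => U i x) l (𝓝 (V x))) (ξ : ℝ) :
    Tendsto (fun i => Dh α (U i) ξ) l (𝓝 (Dh α V ξ)) := by
  unfold Dh
  exact ((((h _).add (h _)).add ((h _).add (h _))).add ((h _).add (h _))).sub ((h ξ).const_mul 6)

end DiscreteDiffusion

noncomputable def waveRHS (α : ℝ) (f U : ℝ → ℝ) (ξ : ℝ) : ℝ :=
  (1/6) * Dh α U ξ + f (U ξ)

section WaveRHS

variable {α : ℝ} {f U : ℝ → ℝ}

lemma continuous_waveRHS (hf : ContinuousOn f (Icc 0 1)) (hUc : Continuous U)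
    (hU : ∀ x, U x ∈ Icc (0:ℝ) 1) : Continuous (waveRHS α f U) :=
  (continuous_const.mul (continuous_Dh hUc)).add (hf.comp_continuous hUc hU)

lemma tendsto_waveRHS_of_tendsto (hf : ContinuousOn f (Icc 0 1)) {ι : Type*} {l : Filter ι}
    {V : ι → ℝ → ℝ} (hV : ∀ i x, V i x ∈ Icc (0:ℝ) 1) (hU : ∀ x, U x ∈ Icc (0:ℝ) 1)
    (h : ∀ x, Tendsto (fun i => V i x) l (𝓝 (U x))) (ξ : ℝ) :
    Tendsto (fun i => waveRHS α f (V i) ξ) l (𝓝 (waveRHS α f U ξ)) :=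
  ((tendsto_Dh h ξ).const_mul _).add ((hf (U ξ) (hU ξ)).tendsto.comp
    (tendsto_nhdsWithin_iff.2 ⟨h ξ, Eventually.of_forall fun i => hV i ξ⟩))

lemma tendsto_waveRHS_of_tendsto_comp_add_const (hf : ContinuousOn f (Icc 0 1))
    (hU : ∀ x, U x ∈ Icc (0:ℝ) 1) {l : Filter ℝ} {L : ℝ} (hL : L ∈ Icc (0:ℝ) 1)
    (h : ∀ d, Tendsto (fun t => U (t + d)) l (𝓝 L)) :
    Tendsto (waveRHS α f U) l (𝓝 (f L)) := by
  have hDh : Tendsto (Dh α U) l (𝓝 0) := by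
    simpa [Dh_comp_add_const, Dh_const] using tendsto_Dh (α := α) (U := fun t x => U (x + t))
      (V := fun _ => L) (fun x => by simpa [add_comm] using h x) 0
  have hU0 : Tendsto U l (𝓝 L) := by simpa using h 0
  have := (hDh.const_mul (1/6)).add ((hf L hL).tendsto.comp
    (tendsto_nhdsWithin_iff.2 ⟨hU0, Eventually.of_forall hU⟩))
  rwa [mul_zero, zero_add] at this

lemma abs_waveRHS_sub_le {K L : ℝ}
    (hK : ∀ u ∈ Icc (0:ℝ) 1, ∀ v ∈ Icc (0:ℝ) 1, |f u - f v| ≤ K * |u - v|)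
    (hU : ∀ x, U x ∈ Icc (0:ℝ) 1) (hUL : ∀ s t, |U s - U t| ≤ L * |s - t|) (s t : ℝ) :
    |waveRHS α f U s - waveRHS α f U t| ≤ (2 + K) * L * |s - t| := by
  have hDh := abs_Dh_sub_Dh_le (α := α) hUL s t
  have hK0 : 0 ≤ K := by simpa using (abs_nonneg _).trans (hK 0 (by simp) 1 (by simp))
  have hf := (hK _ (hU s) _ (hU t)).trans (mul_le_mul_of_nonneg_left (hUL s t) hK0)
  calc _ = |(1/6) * (Dh α U s - Dh α U t) + (f (U s) - f (U t))| := by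
        simp only [waveRHS]; ring_nf
    _ ≤ (1/6) * |Dh α U s - Dh α U t| + |f (U s) - f (U t)| := by
        refine (abs_add_le _ _).trans_eq ?_; rw [abs_mul, abs_of_pos (by norm_num)]
    _ ≤ (2 + K) * L * |s - t| := by nlinarith

end WaveRHS

section MonotoneRHS

variable {α K : ℝ} {f : ℝ → ℝ}

/-- The `H[V]` of the monotone iteration. -/
noncomputable def monotoneRHS (α K : ℝ) (f V : ℝ → ℝ) (ξ : ℝ) : ℝ :=
  waveRHS α f V ξ + (K + 1) * V ξ

lemma monotoneRHS_le_monotoneRHS (hK : MonotoneOn (fun s => K * s + f s) (Icc 0 1))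
    {V W : ℝ → ℝ} (hV : ∀ x, V x ∈ Icc (0:ℝ) 1) (hW : ∀ x, W x ∈ Icc (0:ℝ) 1)
    (hVW : ∀ x, V x ≤ W x) (ξ : ℝ) : monotoneRHS α K f V ξ ≤ monotoneRHS α K f W ξ := by
  have := hK (hV ξ) (hW ξ) (hVW ξ)
  simp only [monotoneRHS, waveRHS, Dh] at this ⊢
  linarith [hVW (ξ + delta1 α), hVW (ξ - delta1 α), hVW (ξ + delta2 α), hVW (ξ - delta2 α),
    hVW (ξ + delta3 α), hVW (ξ - delta3 α)]

lemma monotoneRHS_const (s ξ : ℝ) : monotoneRHS α K f (fun _ => s) ξ = f s + (K + 1) * s := by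
  simp [monotoneRHS, waveRHS, Dh_const]

lemma monotoneRHS_nonneg (hK : MonotoneOn (fun s => K * s + f s) (Icc 0 1)) (hf0 : f 0 = 0)
    {V : ℝ → ℝ} (hV : ∀ x, V x ∈ Icc (0:ℝ) 1) (ξ : ℝ) : 0 ≤ monotoneRHS α K f V ξ := by
  simpa [monotoneRHS_const, hf0] using monotoneRHS_le_monotoneRHS (α := α) hK
    (fun _ => left_mem_Icc.2 zero_le_one) hV (fun x => (hV x).1) ξ

lemma monotoneRHS_le (hK : MonotoneOn (fun s => K * s + f s) (Icc 0 1)) (hf1 : f 1 = 0)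
    {V : ℝ → ℝ} (hV : ∀ x, V x ∈ Icc (0:ℝ) 1) (ξ : ℝ) : monotoneRHS α K f V ξ ≤ K + 1 := by
  simpa [monotoneRHS_const, hf1] using monotoneRHS_le_monotoneRHS (α := α) hK
    hV (fun _ => right_mem_Icc.2 zero_le_one) (fun x => (hV x).2) ξ

lemma monotoneRHS_comp_add_const (V : ℝ → ℝ) (b ξ : ℝ) :
    monotoneRHS α K f (fun x => V (x + b)) ξ = monotoneRHS α K f V (ξ + b) := by
  simp only [monotoneRHS, waveRHS, Dh_comp_add_const]

lemma monotone_monotoneRHS (hK : MonotoneOn (fun s => K * s + f s) (Icc 0 1)) {V : ℝ → ℝ}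
    (hV : ∀ x, V x ∈ Icc (0:ℝ) 1) (hVm : Monotone V) : Monotone (monotoneRHS α K f V) := by
  intro x y hxy
  simpa [monotoneRHS_comp_add_const] using monotoneRHS_le_monotoneRHS (α := α) hK hV
    (fun _ => hV _) (fun z => hVm (le_add_of_nonneg_right (sub_nonneg.2 hxy))) x

lemma continuous_monotoneRHS (hf : ContinuousOn f (Icc 0 1)) {V : ℝ → ℝ} (hVc : Continuous V)
    (hV : ∀ x, V x ∈ Icc (0:ℝ) 1) : Continuous (monotoneRHS α K f V) :=
  (continuous_waveRHS hf hVc hV).add (continuous_const.mul hVc)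

lemma tendsto_monotoneRHS (hf : ContinuousOn f (Icc 0 1)) {ι : Type*} {l : Filter ι}
    {U : ι → ℝ → ℝ} {V : ℝ → ℝ} (hU : ∀ i x, U i x ∈ Icc (0:ℝ) 1) (hV : ∀ x, V x ∈ Icc (0:ℝ) 1)
    (h : ∀ x, Tendsto (fun i => U i x) l (𝓝 (V x))) (ξ : ℝ) :
    Tendsto (fun i => monotoneRHS α K f (U i) ξ) l (𝓝 (monotoneRHS α K f V ξ)) :=
  (tendsto_waveRHS_of_tendsto hf hU hV h ξ).add ((h ξ).const_mul _)

end MonotoneRHS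

def IsUpperSolution (α : ℝ) (f : ℝ → ℝ) (c p : ℝ) (φ : ℝ → ℝ) : Prop :=
  ∀ ξ ≠ p, ∃ d, HasDerivAt φ d ξ ∧ waveRHS α f φ ξ ≤ c * d

def IsLowerSolution (α : ℝ) (f : ℝ → ℝ) (c p : ℝ) (φ : ℝ → ℝ) : Prop :=
  ∀ ξ ≠ p, ∃ d, HasDerivAt φ d ξ ∧ c * d ≤ waveRHS α f φ ξ

/-- Variation of constants for `c U' + (K + 1) U = H[V]`: the solution bounded at `-∞`. -/
noncomputable def waveOperator (α K : ℝ) (f : ℝ → ℝ) (c : ℝ) (V : ℝ → ℝ) (ξ : ℝ) : ℝ :=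
  (1/c) * (exp (-((K + 1) / c * ξ)) * ∫ s in Iic ξ, exp ((K + 1) / c * s) * monotoneRHS α K f V s)

structure IterationHyp (K c : ℝ) (f : ℝ → ℝ) : Prop where
  pos : 0 < c
  continuousOn : ContinuousOn f (Icc 0 1)
  map_zero : f 0 = 0
  map_one : f 1 = 0
  monotoneOn : MonotoneOn (fun s => K * s + f s) (Icc 0 1)

namespace IterationHyp

variable {α K c : ℝ} {f V W φ : ℝ → ℝ}

lemma nonneg (h : IterationHyp K c f) : 0 ≤ K := by
  simpa [h.map_zero, h.map_one] using
    h.monotoneOn (left_mem_Icc.2 zero_le_one) (right_mem_Icc.2 zero_le_one) zero_le_one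

lemma rate_pos (h : IterationHyp K c f) : 0 < (K + 1) / c :=
  div_pos (by linarith [h.nonneg]) h.pos

lemma integrableOn_exp_mul_monotoneRHS (h : IterationHyp K c f) (hVc : Continuous V)
    (hV : ∀ x, V x ∈ Icc (0:ℝ) 1) (ξ : ℝ) :
    IntegrableOn (fun s => exp ((K + 1) / c * s) * monotoneRHS α K f V s) (Iic ξ) :=
  (integrableOn_exp_mul_Iic h.rate_pos ξ).mul_bdd
    (continuous_monotoneRHS h.continuousOn hVc hV).aestronglyMeasurable
    (ae_of_all _ fun s => by
      rw [Real.norm_eq_abs, abs_le]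
      have := monotoneRHS_nonneg (α := α) h.monotoneOn h.map_zero hV s
      exact ⟨by linarith [h.nonneg], monotoneRHS_le h.monotoneOn h.map_one hV s⟩)

lemma hasDerivAt_waveOperator (h : IterationHyp K c f) (hVc : Continuous V)
    (hV : ∀ x, V x ∈ Icc (0:ℝ) 1) (ξ : ℝ) :
    HasDerivAt (waveOperator α K f c V)
      ((monotoneRHS α K f V ξ - (K + 1) * waveOperator α K f c V ξ) / c) ξ := by
  set ρ := (K + 1) / c
  have hG : Continuous fun s => exp (ρ * s) * monotoneRHS α K f V s :=
    (continuous_exp.comp (continuous_const_mul ρ)).mul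
      (continuous_monotoneRHS h.continuousOn hVc hV)
  have hJ := hasDerivAt_setIntegral_Iic hG (h.integrableOn_exp_mul_monotoneRHS hVc hV) ξ
  have hE : HasDerivAt (fun x => exp (-(ρ * x))) (exp (-(ρ * ξ)) * -ρ) ξ :=
    (hasDerivAt_exp _).comp ξ (((hasDerivAt_id ξ).const_mul ρ).neg.congr_deriv (by simp))
  refine ((hE.mul hJ).const_mul (1 / c)).congr_deriv ?_
  have hc := h.pos.ne'
  simp only [waveOperator, ρ, exp_neg]
  field_simp
  ring

lemma waveOperator_nonneg (h : IterationHyp K c f) (hV : ∀ x, V x ∈ Icc (0:ℝ) 1) (ξ : ℝ) :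
    0 ≤ waveOperator α K f c V ξ :=
  mul_nonneg (one_div_nonneg.2 h.pos.le) (mul_nonneg (exp_pos _).le
    (setIntegral_nonneg measurableSet_Iic fun s _ =>
      mul_nonneg (exp_pos _).le (monotoneRHS_nonneg h.monotoneOn h.map_zero hV s)))

/-- `waveOperator` averages `H[V]` over `(-∞, ξ]` against a kernel of mass `1 / (K + 1)`. -/
lemma mul_waveOperator_le (h : IterationHyp K c f) (hVc : Continuous V)
    (hV : ∀ x, V x ∈ Icc (0:ℝ) 1) {ξ M : ℝ} (hM : ∀ s ≤ ξ, monotoneRHS α K f V s ≤ M) :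
    (K + 1) * waveOperator α K f c V ξ ≤ M := by
  set ρ := (K + 1) / c
  have hint : ∫ s in Iic ξ, exp (ρ * s) * monotoneRHS α K f V s ≤ exp (ρ * ξ) / ρ * M := by
    rw [← integral_exp_mul_Iic h.rate_pos, ← integral_mul_const]
    exact setIntegral_mono_on (h.integrableOn_exp_mul_monotoneRHS hVc hV ξ)
      ((integrableOn_exp_mul_Iic h.rate_pos ξ).mul_const M) measurableSet_Iic
      fun s hs => mul_le_mul_of_nonneg_left (hM s hs) (exp_pos _).le
  have hc := h.pos
  have hK : 0 < K + 1 := by linarith [h.nonneg]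
  calc (K + 1) * waveOperator α K f c V ξ
      ≤ (K + 1) * ((1 / c) * (exp (-(ρ * ξ)) * (exp (ρ * ξ) / ρ * M))) := by
        unfold waveOperator
        gcongr
    _ = M := by
        rw [exp_neg]; field_simp; simp only [ρ]; field_simp

lemma waveOperator_le_one (h : IterationHyp K c f) (hVc : Continuous V)
    (hV : ∀ x, V x ∈ Icc (0:ℝ) 1) (ξ : ℝ) : waveOperator α K f c V ξ ≤ 1 := by
  have := h.mul_waveOperator_le (ξ := ξ) hVc hV fun s _ =>
    monotoneRHS_le (α := α) h.monotoneOn h.map_one hV s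
  nlinarith [h.nonneg]

lemma waveOperator_mem_Icc (h : IterationHyp K c f) (hVc : Continuous V)
    (hV : ∀ x, V x ∈ Icc (0:ℝ) 1) (ξ : ℝ) : waveOperator α K f c V ξ ∈ Icc (0:ℝ) 1 :=
  ⟨h.waveOperator_nonneg hV ξ, h.waveOperator_le_one hVc hV ξ⟩

lemma continuous_waveOperator (h : IterationHyp K c f) (hVc : Continuous V)
    (hV : ∀ x, V x ∈ Icc (0:ℝ) 1) : Continuous (waveOperator α K f c V) :=
  continuous_iff_continuousAt.2 fun ξ => (h.hasDerivAt_waveOperator hVc hV ξ).continuousAt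

lemma monotone_waveOperator (h : IterationHyp K c f) (hVc : Continuous V)
    (hV : ∀ x, V x ∈ Icc (0:ℝ) 1) (hVm : Monotone V) : Monotone (waveOperator α K f c V) :=
  monotone_of_hasDerivAt_nonneg (h.hasDerivAt_waveOperator hVc hV) fun _ =>
    div_nonneg (sub_nonneg.2 (h.mul_waveOperator_le hVc hV fun _ hs =>
      monotone_monotoneRHS h.monotoneOn hV hVm hs)) h.pos.le

lemma abs_waveOperator_sub_le (h : IterationHyp K c f) (hVc : Continuous V)
    (hV : ∀ x, V x ∈ Icc (0:ℝ) 1) (s t : ℝ) :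
    |waveOperator α K f c V s - waveOperator α K f c V t| ≤ (K + 1) / c * |s - t| :=
  abs_sub_le_of_abs_deriv_le (h.hasDerivAt_waveOperator hVc hV) (fun ξ => by
    have h0 := monotoneRHS_nonneg (α := α) h.monotoneOn h.map_zero hV ξ
    have h1 := monotoneRHS_le (α := α) h.monotoneOn h.map_one hV ξ
    have h2 := h.waveOperator_mem_Icc (α := α) hVc hV ξ
    have hK := h.nonneg
    rw [abs_div, abs_of_pos h.pos]
    gcongr
    · exact h.pos.le
    · rw [abs_le]; constructor <;> nlinarith [h2.1, h2.2]) s t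

lemma waveOperator_le_waveOperator (h : IterationHyp K c f) (hVc : Continuous V)
    (hWc : Continuous W) (hV : ∀ x, V x ∈ Icc (0:ℝ) 1) (hW : ∀ x, W x ∈ Icc (0:ℝ) 1)
    (hVW : ∀ x, V x ≤ W x) (ξ : ℝ) : waveOperator α K f c V ξ ≤ waveOperator α K f c W ξ := by
  unfold waveOperator
  gcongr ?_ * (_ * ?_)
  · exact one_div_nonneg.2 h.pos.le
  exact setIntegral_mono_on (h.integrableOn_exp_mul_monotoneRHS hVc hV ξ)
    (h.integrableOn_exp_mul_monotoneRHS hWc hW ξ) measurableSet_Iic fun s _ =>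
      mul_le_mul_of_nonneg_left (monotoneRHS_le_monotoneRHS h.monotoneOn hV hW hVW s)
        (exp_pos _).le

lemma tendsto_waveOperator (h : IterationHyp K c f) {U : ℕ → ℝ → ℝ} (hUc : ∀ n, Continuous (U n))
    (hU : ∀ n x, U n x ∈ Icc (0:ℝ) 1) (hV : ∀ x, V x ∈ Icc (0:ℝ) 1)
    (hUV : ∀ x, Tendsto (fun n => U n x) atTop (𝓝 (V x))) (ξ : ℝ) :
    Tendsto (fun n => waveOperator α K f c (U n) ξ) atTop (𝓝 (waveOperator α K f c V ξ)) := by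
  refine ((tendsto_integral_of_dominated_convergence (fun s => exp ((K + 1) / c * s) * (K + 1))
    (fun n => (h.integrableOn_exp_mul_monotoneRHS (hUc n) (hU n) ξ).aestronglyMeasurable)
    ((integrableOn_exp_mul_Iic h.rate_pos ξ).mul_const _) (fun n => ae_of_all _ fun s => ?_)
    (ae_of_all _ fun s => ((tendsto_monotoneRHS h.continuousOn hU hV hUV s).const_mul _))
    ).const_mul _).const_mul _
  have h0 := monotoneRHS_nonneg (α := α) h.monotoneOn h.map_zero (hU n) s
  rw [Real.norm_eq_abs, abs_of_nonneg (mul_nonneg (exp_pos _).le h0)]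
  exact mul_le_mul_of_nonneg_left (monotoneRHS_le h.monotoneOn h.map_one (hU n) s) (exp_pos _).le

lemma hasDerivAt_exp_mul_sub_waveOperator (h : IterationHyp K c f) (hφc : Continuous φ)
    (hφ : ∀ x, φ x ∈ Icc (0:ℝ) 1) {t d : ℝ} (hd : HasDerivAt φ d t) :
    HasDerivAt (fun s => exp ((K + 1) / c * s) * (φ s - waveOperator α K f c φ s))
      (exp ((K + 1) / c * t) / c * (c * d - waveRHS α f φ t)) t := by
  have hE : HasDerivAt (fun s => exp ((K + 1) / c * s)) (exp ((K + 1) / c * t) * ((K + 1) / c)) t :=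
    (hasDerivAt_exp _).comp t ((hasDerivAt_id t).const_mul _ |>.congr_deriv (mul_one _))
  refine (hE.mul (hd.sub (h.hasDerivAt_waveOperator hφc hφ t))).congr_deriv ?_
  have hc := h.pos.ne'
  simp only [monotoneRHS, Pi.sub_apply]
  field_simp
  ring

lemma tendsto_exp_mul_sub_waveOperator (h : IterationHyp K c f) (hφc : Continuous φ)
    (hφ : ∀ x, φ x ∈ Icc (0:ℝ) 1) :
    Tendsto (fun s => exp ((K + 1) / c * s) * (φ s - waveOperator α K f c φ s)) atBot (𝓝 0) := by
  have hexp : Tendsto (fun s => exp ((K + 1) / c * s)) atBot (𝓝 0) :=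
    tendsto_exp_atBot.comp (tendsto_id.const_mul_atBot h.rate_pos)
  refine squeeze_zero_norm (fun s => ?_) hexp
  have := h.waveOperator_mem_Icc (α := α) hφc hφ s
  rw [norm_mul, Real.norm_of_nonneg (exp_pos _).le]
  refine mul_le_of_le_one_right (exp_pos _).le ?_
  rw [Real.norm_eq_abs, abs_le]
  constructor <;> linarith [(hφ s).1, (hφ s).2, this.1, this.2]

lemma waveOperator_le_of_isUpperSolution (h : IterationHyp K c f) (hφc : Continuous φ)
    (hφ : ∀ x, φ x ∈ Icc (0:ℝ) 1) {p : ℝ} (hup : IsUpperSolution α f c p φ) (ξ : ℝ) :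
    waveOperator α K f c φ ξ ≤ φ ξ := by
  have hmono : Monotone fun s => exp ((K + 1) / c * s) * (φ s - waveOperator α K f c φ s) :=
    monotone_of_hasDerivAt_nonneg_of_ne (p := p) ((continuous_exp.comp (continuous_const_mul _)).mul
      (hφc.sub (h.continuous_waveOperator hφc hφ))) fun t ht => by
        obtain ⟨d, hd, hineq⟩ := hup t ht
        exact ⟨_, h.hasDerivAt_exp_mul_sub_waveOperator hφc hφ hd,
          mul_nonneg (div_nonneg (exp_pos _).le h.pos.le) (sub_nonneg.2 hineq)⟩
  have := hmono.le_of_tendsto (h.tendsto_exp_mul_sub_waveOperator hφc hφ) ξ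
  exact sub_nonneg.1 (nonneg_of_mul_nonneg_right (by simpa [mul_comm] using this) (exp_pos _))

lemma le_waveOperator_of_isLowerSolution (h : IterationHyp K c f) (hφc : Continuous φ)
    (hφ : ∀ x, φ x ∈ Icc (0:ℝ) 1) {p : ℝ} (hlow : IsLowerSolution α f c p φ) (ξ : ℝ) :
    φ ξ ≤ waveOperator α K f c φ ξ := by
  have hmono : Monotone fun s => -(exp ((K + 1) / c * s) * (φ s - waveOperator α K f c φ s)) :=
    monotone_of_hasDerivAt_nonneg_of_ne (p := p) ((continuous_exp.comp (continuous_const_mul _)).mul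
      (hφc.sub (h.continuous_waveOperator hφc hφ))).neg fun t ht => by
        obtain ⟨d, hd, hineq⟩ := hlow t ht
        refine ⟨_, (h.hasDerivAt_exp_mul_sub_waveOperator hφc hφ hd).neg, neg_nonneg.2 ?_⟩
        exact mul_nonpos_of_nonneg_of_nonpos (div_nonneg (exp_pos _).le h.pos.le)
          (sub_nonpos.2 hineq)
  have := hmono.le_of_tendsto (by simpa using (h.tendsto_exp_mul_sub_waveOperator hφc hφ).neg) ξ
  exact sub_nonpos.1 (nonpos_of_mul_nonpos_right (by linarith) (exp_pos _))

lemma exists_fixedPoint_between (h : IterationHyp K c f) {ψ : ℝ → ℝ} {p p' : ℝ}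
    (hφc : Continuous φ) (hφ : ∀ x, φ x ∈ Icc (0:ℝ) 1) (hφm : Monotone φ)
    (hup : IsUpperSolution α f c p φ) (hψc : Continuous ψ) (hψ : ∀ x, ψ x ∈ Icc (0:ℝ) 1)
    (hlow : IsLowerSolution α f c p' ψ) (hψφ : ∀ x, ψ x ≤ φ x) :
    ∃ W : ℝ → ℝ, Continuous W ∧ (∀ x, W x ∈ Icc (0:ℝ) 1) ∧ Monotone W ∧
      (∀ x, ψ x ≤ W x ∧ W x ≤ φ x) ∧ ∀ x, waveOperator α K f c W x = W x := by
  obtain ⟨V, hV0, hV⟩ : ∃ V : ℕ → ℝ → ℝ, V 0 = φ ∧ ∀ n, V (n + 1) = waveOperator α K f c (V n) :=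
    ⟨fun n => (waveOperator α K f c)^[n] φ, rfl,
      fun n => Function.iterate_succ_apply' (waveOperator α K f c) n φ⟩
  have hinv : ∀ n, Continuous (V n) ∧ (∀ x, V n x ∈ Icc (0:ℝ) 1) ∧ Monotone (V n) ∧
      ∀ x, ψ x ≤ V n x := by
    intro n
    induction n with
    | zero => exact hV0 ▸ ⟨hφc, hφ, hφm, hψφ⟩
    | succ n ih =>
      obtain ⟨hc, hr, hm, hge⟩ := ih
      rw [hV]
      exact ⟨h.continuous_waveOperator hc hr, h.waveOperator_mem_Icc hc hr,
        h.monotone_waveOperator hc hr hm, fun x =>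
          (h.le_waveOperator_of_isLowerSolution hψc hψ hlow x).trans
            (h.waveOperator_le_waveOperator hψc hc hψ hr hge x)⟩
  have hdec : ∀ n x, V (n + 1) x ≤ V n x := by
    intro n
    induction n with
    | zero => rw [hV, hV0]; exact h.waveOperator_le_of_isUpperSolution hφc hφ hup
    | succ n ih =>
      have := h.waveOperator_le_waveOperator (α := α) (hinv (n + 1)).1 (hinv n).1
        (hinv _).2.1 (hinv n).2.1 ih
      rwa [← hV, ← hV] at this
  have hanti : ∀ x, Antitone fun n => V n x := fun x => antitone_nat_of_succ_le fun n => hdec n x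
  have hbdd : ∀ x, BddBelow (range fun n => V n x) :=
    fun x => ⟨0, by rintro _ ⟨n, rfl⟩; exact ((hinv n).2.1 x).1⟩
  set W := fun x => ⨅ n, V n x
  have hVW : ∀ x, Tendsto (fun n => V n x) atTop (𝓝 (W x)) :=
    fun x => tendsto_atTop_ciInf (hanti x) (hbdd x)
  have hW : ∀ x, W x ∈ Icc (0:ℝ) 1 := fun x => ⟨le_ciInf fun n => ((hinv n).2.1 x).1,
    (ciInf_le (hbdd x) 0).trans (hV0 ▸ hφ x).2⟩
  have hWc : Continuous W := continuous_of_abs_sub_le (abs_sub_le_of_tendsto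
    (F := fun n => V (n + 1)) (fun n s t => by
      rw [hV]; exact h.abs_waveOperator_sub_le (hinv n).1 (hinv n).2.1 s t)
    fun x => (hVW x).comp (tendsto_add_atTop_nat 1))
  refine ⟨W, hWc, hW, fun x y hxy => ciInf_mono (hbdd x) fun n => (hinv n).2.2.1 hxy,
    fun x => ⟨le_ciInf fun n => (hinv n).2.2.2 x, hV0 ▸ ciInf_le (hbdd x) 0⟩, fun x => ?_⟩
  refine tendsto_nhds_unique (h.tendsto_waveOperator (fun n => (hinv n).1) (fun n => (hinv n).2.1)
    hW hVW x) ?_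
  have := (hVW x).comp (tendsto_add_atTop_nat 1)
  simpa only [Function.comp_def, hV] using this

end IterationHyp

section ExponentialProfiles

variable {α : ℝ} {f : ℝ → ℝ}

/-- Exponentials are eigenfunctions of the linearized equation, with eigenvalue `g(λ)`. -/
lemma Dh_exp (α a lam ξ : ℝ) :
    (1/6) * Dh α (fun x => exp (lam * x)) ξ + a * exp (lam * ξ) = gfun a α lam * exp (lam * ξ) := by
  simp only [Dh, gfun, mul_add, mul_sub, exp_add, exp_sub, exp_neg]
  field_simp

lemma isUpperSolution_min_one_exp {a c lam : ℝ} (hf : ∀ s ∈ Icc (0:ℝ) 1, f s ≤ a * s)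
    (hf1 : f 1 = 0) (hlam : 0 < lam) (hg : gfun a α lam ≤ c * lam) :
    IsUpperSolution α f c 0 (fun x => min 1 (exp (lam * x))) := by
  intro ξ hξ
  rcases hξ.lt_or_gt with hξ | hξ
  · have hloc : ∀ x < 0, min 1 (exp (lam * x)) = exp (lam * x) := fun x hx =>
      min_eq_right (exp_le_one_iff.2 (by nlinarith : lam * x ≤ 0))
    refine ⟨_, (hasDerivAt_exp_const_mul lam ξ).congr_of_eventuallyEq
      (eventually_of_mem (Iio_mem_nhds hξ) hloc), ?_⟩
    have hDh := Dh_le_Dh (α := α) (fun x => min_le_right 1 (exp (lam * x))) (hloc ξ hξ)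
    have hfξ := hf _ ⟨(exp_pos _).le, exp_le_one_iff.2 (by nlinarith : lam * ξ ≤ 0)⟩
    have := Dh_exp α a lam ξ
    simp only [waveRHS, hloc ξ hξ] at hDh ⊢
    nlinarith [exp_pos (lam * ξ)]
  · have hloc : ∀ x > 0, min 1 (exp (lam * x)) = 1 := fun x hx =>
      min_eq_left (one_le_exp_iff.2 (by nlinarith : 0 ≤ lam * x))
    refine ⟨0, (hasDerivAt_const ξ (1:ℝ)).congr_of_eventuallyEq
      (eventually_of_mem (Ioi_mem_nhds hξ) hloc), ?_⟩
    have hDh := Dh_le_Dh (α := α) (fun x => min_le_left 1 (exp (lam * x))) (hloc ξ hξ)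
    rw [Dh_const] at hDh
    simp only [waveRHS, hloc ξ hξ, hf1]
    linarith

lemma exp_sub_mul_exp_pos_iff {lam ν q : ℝ} (hq : 0 < q) (hν : lam < ν) (ξ : ℝ) :
    0 < exp (lam * ξ) - q * exp (ν * ξ) ↔ ξ < log q / (lam - ν) := by
  rw [sub_pos, lt_div_iff_of_neg (by linarith), ← exp_log hq, ← exp_add, exp_lt_exp, log_exp]
  constructor <;> intro h <;> linarith

lemma isLowerSolution_max_zero_exp_sub {a c lam ν q N θ : ℝ}
    (hH : ∀ s ∈ Icc (0:ℝ) 1, a * s - N * s ^ (1 + θ) ≤ f s) (hN : 0 ≤ N) (hθ : 0 < θ)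
    (hν : lam < ν) (hνθ : ν ≤ (1 + θ) * lam) (hroot : c * lam ≤ gfun a α lam) (hq : 1 ≤ q)
    (hqN : N ≤ q * (c * ν - gfun a α ν)) :
    IsLowerSolution α f c (log q / (lam - ν))
      (fun x => max 0 (exp (lam * x) - q * exp (ν * x))) := by
  have hpos := exp_sub_mul_exp_pos_iff (one_pos.trans_le hq) hν
  have hp : log q / (lam - ν) ≤ 0 := div_nonpos_of_nonneg_of_nonpos (log_nonneg hq) (by linarith)
  intro ξ hξ
  rcases hξ.lt_or_gt with hξ | hξ
  · have hloc : ∀ x < log q / (lam - ν), max 0 (exp (lam * x) - q * exp (ν * x)) =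
        exp (lam * x) - q * exp (ν * x) := fun x hx => max_eq_right ((hpos x).2 hx).le
    refine ⟨_, ((hasDerivAt_exp_const_mul lam ξ).sub ((hasDerivAt_exp_const_mul ν ξ).const_mul q))
      |>.congr_of_eventuallyEq (eventually_of_mem (Iio_mem_nhds hξ) hloc), ?_⟩
    set s := exp (lam * ξ) - q * exp (ν * ξ)
    have hξ0 : ξ < 0 := hξ.trans_le hp
    have hlam : 0 < lam := by nlinarith
    have hs1 : s ≤ exp (lam * ξ) := by nlinarith [exp_pos (ν * ξ)]
    have hs : s ∈ Icc (0:ℝ) 1 :=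
      ⟨((hpos ξ).2 hξ).le, hs1.trans (exp_le_one_iff.2 (by nlinarith : lam * ξ ≤ 0))⟩
    -- `ν ≤ (1 + θ) λ` makes the error term of (H) of the order of the correction `q e^{νξ}`.
    have hsθ : s ^ (1 + θ) ≤ exp (ν * ξ) := calc
      s ^ (1 + θ) ≤ exp (lam * ξ) ^ (1 + θ) := rpow_le_rpow hs.1 hs1 (by linarith)
      _ = exp ((1 + θ) * lam * ξ) := by rw [← exp_mul]; ring_nf
      _ ≤ exp (ν * ξ) := exp_le_exp.2 (by nlinarith)
    have hDh := Dh_le_Dh (α := α) (fun x => le_max_right 0 (exp (lam * x) - q * exp (ν * x)))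
      (hloc ξ hξ).symm
    have hlin : Dh α (fun x => exp (lam * x) - q * exp (ν * x)) ξ =
        Dh α (fun x => exp (lam * x)) ξ - q * Dh α (fun x => exp (ν * x)) ξ := by
      simp only [Dh]; ring
    have hexp₁ := Dh_exp α a lam ξ
    have hexp₂ := Dh_exp α a ν ξ
    have hfs := hH s hs
    have hNs : N * s ^ (1 + θ) ≤ q * (c * ν - gfun a α ν) * exp (ν * ξ) :=
      mul_le_mul hqN hsθ (rpow_nonneg hs.1 _) (hN.trans hqN)
    simp only [waveRHS, hloc ξ hξ] at hDh ⊢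
    nlinarith [exp_pos (lam * ξ)]
  · have hloc : ∀ x > log q / (lam - ν), max 0 (exp (lam * x) - q * exp (ν * x)) = 0 :=
      fun x hx => max_eq_left (not_lt.1 fun h => hx.not_gt ((hpos x).1 h))
    refine ⟨0, (hasDerivAt_const ξ (0:ℝ)).congr_of_eventuallyEq
      (eventually_of_mem (Ioi_mem_nhds hξ) hloc), ?_⟩
    have hDh := Dh_le_Dh (α := α) (fun x => le_max_left 0 (exp (lam * x) - q * exp (ν * x)))
      (hloc ξ hξ).symm
    have hf0 := hH 0 (left_mem_Icc.2 zero_le_one)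
    rw [zero_rpow (by linarith)] at hf0
    rw [Dh_const] at hDh
    simp only [waveRHS, hloc ξ hξ]
    linarith

lemma max_zero_exp_sub_le_min_one_exp {lam ν q : ℝ} (hlam : 0 < lam) (hν : lam < ν) (hq : 1 ≤ q)
    (x : ℝ) : max 0 (exp (lam * x) - q * exp (ν * x)) ≤ min 1 (exp (lam * x)) := by
  have hq' : 0 ≤ q * exp (ν * x) := by positivity
  refine max_le (le_min zero_le_one (exp_pos _).le) (le_min ?_ (by linarith))
  rcases le_total x 0 with hx | hx
  · linarith [exp_le_one_iff.2 (by nlinarith : lam * x ≤ 0)]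
  · nlinarith [exp_le_exp.2 (by nlinarith : lam * x ≤ ν * x)]

end ExponentialProfiles

section TravelingWaves

variable {α c : ℝ} {f f' : ℝ → ℝ} {U : ℝ → ℝ}

lemma FisherKPP.eq_zero_or_eq_one_of_tendsto (hf : FisherKPP f f') (hc : 0 < c)
    (hU : ∀ x, U x ∈ Icc (0:ℝ) 1) (hU' : ∀ ξ, HasDerivAt U (waveRHS α f U ξ / c) ξ)
    {l : Filter ℝ} (hl : l = atTop ∨ l = atBot) {L : ℝ} (hL : L ∈ Icc (0:ℝ) 1)
    (hUL : Tendsto U l (𝓝 L)) : L = 0 ∨ L = 1 := by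
  refine hf.eq_zero_or_eq_one hL (le_antisymm ?_ (hf.nonneg hL))
  -- `U'` tends to `f L / c` along `l`, which is impossible for `f L > 0` as `U` is bounded.
  suffices f L / c ≤ 0 from ((div_le_iff₀ hc).1 this).trans_eq (zero_mul c)
  have hrange := range_subset_iff.2 hU
  rcases hl with rfl | rfl
  · exact nonpos_of_tendsto_deriv_atTop hU' (bddAbove_Icc.mono hrange)
      ((tendsto_waveRHS_of_tendsto_comp_add_const hf.continuousOn hU hL fun d =>
        hUL.comp (tendsto_atTop_add_const_right _ d tendsto_id)).div_const c)
  · exact nonpos_of_tendsto_deriv_atBot hU' (bddBelow_Icc.mono hrange)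
      ((tendsto_waveRHS_of_tendsto_comp_add_const hf.continuousOn hU hL fun d =>
        hUL.comp (tendsto_atBot_add_const_right _ d tendsto_id)).div_const c)

lemma FisherKPP.isTravelingWave_of_hasDerivAt (hf : FisherKPP f f') (hc : 0 < c)
    (hU : ∀ x, U x ∈ Icc (0:ℝ) 1) (hUm : Monotone U)
    (hU' : ∀ ξ, HasDerivAt U (waveRHS α f U ξ / c) ξ) {a b : ℝ} (ha : 0 < U a)
    (hb : U b < 1) : IsTravelingWave α f c U := by
  have hUc : Continuous U := continuous_iff_continuousAt.2 fun ξ => (hU' ξ).continuousAt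
  have hderiv : deriv U = fun ξ => waveRHS α f U ξ / c :=
    funext fun ξ => (hU' ξ).deriv
  have hbdd : BddAbove (range U) ∧ BddBelow (range U) :=
    ⟨bddAbove_Icc.mono (range_subset_iff.2 hU), bddBelow_Icc.mono (range_subset_iff.2 hU)⟩
  have htop := tendsto_atTop_ciSup hUm hbdd.1
  have hbot := tendsto_atBot_ciInf hUm hbdd.2
  have hsup : (⨆ x, U x) ∈ Icc (0:ℝ) 1 :=
    ⟨(hU 0).1.trans (le_ciSup hbdd.1 0), ciSup_le fun x => (hU x).2⟩
  have hinf : (⨅ x, U x) ∈ Icc (0:ℝ) 1 :=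
    ⟨le_ciInf fun x => (hU x).1, (ciInf_le hbdd.2 0).trans (hU 0).2⟩
  refine ⟨contDiff_one_iff_deriv.2 ⟨fun ξ => (hU' ξ).differentiableAt, hderiv ▸
      (continuous_waveRHS hf.continuousOn hUc hU).div_const c⟩, hU,
    fun ξ => by simp only [hderiv, waveRHS]; field_simp, ?_, ?_⟩
  · rcases hf.eq_zero_or_eq_one_of_tendsto hc hU hU' (Or.inr rfl) hinf hbot with h | h
    · rwa [h] at hbot
    · exact absurd (h ▸ ciInf_le hbdd.2 b) hb.not_ge
  · rcases hf.eq_zero_or_eq_one_of_tendsto hc hU hU' (Or.inl rfl) hsup htop with h | h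
    · exact absurd (h ▸ le_ciSup hbdd.1 a) ha.not_ge
    · rwa [h] at htop

namespace IsTravelingWave

lemma hasDerivAt (hU : IsTravelingWave α f c U) (hc : c ≠ 0) (ξ : ℝ) :
    HasDerivAt U (waveRHS α f U ξ / c) ξ := by
  obtain ⟨hCD, -, hODE, -, -⟩ := hU
  have := ((hCD.differentiable one_ne_zero) ξ).hasDerivAt
  rwa [show deriv U ξ = waveRHS α f U ξ / c from
    (eq_div_iff hc).2 (by rw [mul_comm]; exact hODE ξ)] at this

lemma intervalIntegral_eq (hU : IsTravelingWave α f c U) (x y : ℝ) :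
    ∫ t in x..y, waveRHS α f U t = c * (U y - U x) := by
  obtain ⟨hCD, -, hODE, -, -⟩ := hU
  simp only [waveRHS, ← hODE]
  rw [intervalIntegral.integral_const_mul, intervalIntegral.integral_deriv_eq_sub
    (fun t _ => (hCD.differentiable one_ne_zero) t)
    ((hCD.continuous_deriv le_rfl).intervalIntegrable x y)]

lemma comp_add_const (hU : IsTravelingWave α f c U) (b : ℝ) :
    IsTravelingWave α f c (fun x => U (x + b)) := by
  obtain ⟨hCD, hU, hODE, hbot, htop⟩ := hU
  exact ⟨hCD.comp (contDiff_id.add contDiff_const), fun x => hU _,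
    fun ξ => by rw [deriv_comp_add_const, Dh_comp_add_const]; exact hODE _,
    hbot.comp (tendsto_atBot_add_const_right _ b tendsto_id),
    htop.comp (tendsto_atTop_add_const_right _ b tendsto_id)⟩

lemma exists_eq_half (hU : IsTravelingWave α f c U) : ∃ b, U b = 1/2 := by
  obtain ⟨hCD, -, -, hbot, htop⟩ := hU
  obtain ⟨x, hx⟩ := (hbot.eventually (gt_mem_nhds (by norm_num : (0:ℝ) < 1/2))).exists
  obtain ⟨y, hy⟩ := (htop.eventually (lt_mem_nhds (by norm_num : (1/2:ℝ) < 1))).exists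
  exact intermediate_value_univ x y hCD.continuous ⟨hx.le, hy.le⟩

lemma abs_sub_le (hU : IsTravelingWave α f c U) (hc : 0 < c) {M : ℝ}
    (hM : ∀ s ∈ Icc (0:ℝ) 1, |f s| ≤ M) (s t : ℝ) : |U s - U t| ≤ (1 + M) / c * |s - t| := by
  refine abs_sub_le_of_abs_deriv_le (hU.hasDerivAt hc.ne') (fun ξ => ?_) s t
  have hDh : |(1/6) * Dh α U ξ| ≤ 1 := by
    rw [abs_mul, abs_of_pos (by norm_num : (0:ℝ) < 1/6)]
    linarith [abs_Dh_le (α := α) hU.2.1 ξ]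
  rw [abs_div, abs_of_pos hc]
  gcongr
  exact (abs_add_le _ _).trans (add_le_add hDh (hM _ (hU.2.1 ξ)))

end IsTravelingWave

theorem FisherKPP.exists_monotone_wave_of_cstar_lt {α : ℝ} (hf : FisherKPP f f') {N θ : ℝ}
    (hN : 0 ≤ N) (hθ : 0 < θ) (hH : ∀ s ∈ Icc (0:ℝ) 1, f' 0 * s - N * s ^ (1 + θ) ≤ f s) {c : ℝ}
    (hc : cstar (f' 0) α < c) : ∃ U, IsTravelingWave α f c U ∧ Monotone U := by
  have hc0 : 0 < c := (cstar_pos hf.deriv_zero_pos α).trans hc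
  obtain ⟨lam, ν, hlam, hroot, hν, hνθ, hslack⟩ := exists_root_and_slack hf.deriv_zero_pos hθ hc
  obtain ⟨K, hK⟩ := hf.exists_lipschitz
  have h : IterationHyp K c f :=
    ⟨hc0, hf.continuousOn, hf.map_zero, hf.map_one, monotoneOn_mul_add_of_abs_sub_le hK⟩
  obtain ⟨q, hq, hqN⟩ : ∃ q : ℝ, 1 ≤ q ∧ N ≤ q * (c * ν - gfun (f' 0) α ν) :=
    ⟨_, le_max_left 1 _, (div_le_iff₀ (sub_pos.2 hslack)).1 (le_max_right _ _)⟩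
  have hle := max_zero_exp_sub_le_min_one_exp hlam hν hq
  obtain ⟨W, hWc, hW, hWm, hWb, hTW⟩ := h.exists_fixedPoint_between (by fun_prop)
    (fun x => ⟨le_min zero_le_one (exp_pos _).le, min_le_left _ _⟩)
    (fun x y hxy => min_le_min le_rfl (exp_le_exp.2 (by nlinarith)))
    (isUpperSolution_min_one_exp (α := α) (fun s hs => hf.le_mul hs) hf.map_one hlam hroot.le)
    (by fun_prop) (fun x => ⟨le_max_left _ _, (hle x).trans (min_le_left _ _)⟩)
    (isLowerSolution_max_zero_exp_sub hH hN hθ hν hνθ hroot.ge hq hqN) hle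
  refine ⟨W, hf.isTravelingWave_of_hasDerivAt hc0 hW hWm (fun ξ => ?_)
    (a := log q / (lam - ν) - 1) (b := -1) ?_ ?_, hWm⟩
  · have := h.hasDerivAt_waveOperator (α := α) hWc hW ξ
    rw [funext hTW] at this
    simpa [monotoneRHS] using this
  · exact (lt_max_of_lt_right ((exp_sub_mul_exp_pos_iff (one_pos.trans_le hq) hν _).2
      (by linarith))).trans_le (hWb _).1
  · exact (hWb _).2.trans_lt (min_lt_of_right_lt (exp_lt_one_iff.2 (by linarith)))

theorem FisherKPP.exists_monotone_wave_of_tendsto (hf : FisherKPP f f') (hc : 0 < c)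
    {cs : ℕ → ℝ} (hcs : Tendsto cs atTop (𝓝 c)) (hcs_ge : ∀ n, c ≤ cs n) {V : ℕ → ℝ → ℝ}
    (hV : ∀ n, IsTravelingWave α f (cs n) (V n)) (hVm : ∀ n, Monotone (V n))
    (hV0 : ∀ n, V n 0 = 1/2) : ∃ U, IsTravelingWave α f c U ∧ Monotone U := by
  obtain ⟨K, hK⟩ := hf.exists_lipschitz
  set L := (1 + f' 0) / c
  have hVL : ∀ n s t, |V n s - V n t| ≤ L * |s - t| := fun n s t =>
    ((hV n).abs_sub_le (hc.trans_le (hcs_ge n)) (fun _ => hf.abs_le_deriv_zero) s t).trans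
      (mul_le_mul_of_nonneg_right (div_le_div_of_nonneg_left
        (by linarith [hf.deriv_zero_pos]) hc (hcs_ge n)) (abs_nonneg _))
  set 𝒰 := Ultrafilter.of (atTop : Filter ℕ)
  choose U hU hVU using fun x => exists_tendsto_ultrafilter_of_mem_Icc 𝒰 fun n => (hV n).2.1 x
  have hUL := abs_sub_le_of_tendsto hVL hVU
  have hUc := continuous_of_abs_sub_le hUL
  have hU0 : U 0 = 1/2 := tendsto_nhds_unique (hVU 0) (by simp only [hV0]; exact tendsto_const_nhds)
  have hG := continuous_waveRHS (α := α) hf.continuousOn hUc hU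
  have hint : ∀ y, U y - U 0 = ∫ t in (0:ℝ)..y, waveRHS α f U t / c := fun y => by
    rw [intervalIntegral.integral_div, eq_div_iff hc.ne', mul_comm]
    refine tendsto_nhds_unique (((hcs.mono_left (Ultrafilter.of_le _)).mul
      ((hVU y).sub (hVU 0)))) ?_
    simp only [← (hV _).intervalIntegral_eq]
    exact (tendstoUniformlyOn_of_abs_sub_le (fun n => abs_waveRHS_sub_le hK (hV n).2.1 (hVL n))
      (tendsto_waveRHS_of_tendsto hf.continuousOn (fun n => (hV n).2.1) hU hVU) isCompact_uIcc
      ).tendsto_intervalIntegral (fun n => (continuous_waveRHS hf.continuousOn (hV n).1.continuous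
        (hV n).2.1).intervalIntegrable _ _) (hG.intervalIntegrable _ _)
  have hUm : Monotone U := fun x y hxy =>
    le_of_tendsto_of_tendsto' (hVU x) (hVU y) fun n => hVm n hxy
  exact ⟨U, hf.isTravelingWave_of_hasDerivAt hc hU hUm
    (hasDerivAt_of_sub_eq_integral (hG.div_const c) hint) (a := 0) (b := 0)
    (by rw [hU0]; norm_num) (by rw [hU0]; norm_num), hUm⟩

end TravelingWaves

theorem stmt4 (α : ℝ) (f f' : ℝ → ℝ) (hf : FisherKPP f f')
    (N θ : ℝ) (hN : 0 ≤ N) (hθ : θ ∈ Set.Ioc (0:ℝ) 1)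
    (hH : ∀ s ∈ Set.Icc (0:ℝ) 1, f' 0 * s - N * s ^ (1 + θ) ≤ f s)
    (c : ℝ) (hc : cstar (f' 0) α ≤ c) :
    ∃ U : ℝ → ℝ, IsTravelingWave α f c U ∧ Monotone U := by
  rcases hc.lt_or_eq with hc | rfl
  · exact hf.exists_monotone_wave_of_cstar_lt hN hθ.1 hH hc
  have hwave (n : ℕ) : ∃ V, IsTravelingWave α f (cstar (f' 0) α + 1 / (n + 1)) V ∧
      Monotone V ∧ V 0 = 1/2 := by
    obtain ⟨U, hU, hUm⟩ := hf.exists_monotone_wave_of_cstar_lt hN hθ.1 hH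
      (lt_add_of_pos_right _ n.one_div_pos_of_nat)
    obtain ⟨b, hb⟩ := hU.exists_eq_half
    exact ⟨_, hU.comp_add_const b, fun x y hxy => hUm (by linarith), by simpa using hb⟩
  choose V hV hVm hV0 using hwave
  exact hf.exists_monotone_wave_of_tendsto (cstar_pos hf.deriv_zero_pos α)
    (by simpa using (tendsto_one_div_add_atTop_nhds_zero_nat (𝕜 := ℝ)).const_add _)
    (fun n => le_add_of_nonneg_right n.one_div_pos_of_nat.le) hV hVm hV0
end

section
/- (Monotonicity of the minimal wave speed in the angle.) The function α ↦ c*(α) is strictly decreasing on [0, π/6] and strictly increasing on [π/6, π/3]: if 0 ≤ α₁ < α₂ ≤ π/6 then c*(α₂) < c*(α₁), and if π/6 ≤ α₁ < α₂ ≤ π/3 then c*(α₁) < c*(α₂). -/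
/-!
With u = (λ/2) cos α and v = (√3 λ/2) sin α one has λδ₁ = 2u, λδ₂ = u + v, λδ₃ = u - v, so
3 (g_α(λ) + 1 - a) = cosh 2u + 2 cosh u cosh v. Its α-derivative is
-(2/√3) (v sinh u (2 cosh u + cosh v) - 3u cosh u sinh v), and for 0 < α < π/6, i.e. 0 < v < u, the
bracket is positive because t ↦ sinh t (2 cosh t + cosh v) / (t cosh t) increases on [v, ∞), which in
turn rests on 3 sinh t cosh t < t (2 cosh² t + 1). Hence g_α(λ) strictly decreases in α on [0, π/6]
for every λ > 0. As g_α(λ) ≥ a + λ²/4, the infimum defining c*(α) is attained, and the pointwise strict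
decrease passes to c*. Finally α ↦ π/3 - α swaps δ₁ and δ₂ and negates δ₃, so c* is symmetric
about π/6.
-/

open Real Set Filter

open Topology

lemma lt_of_hasDerivAt_pos {f f' : ℝ → ℝ} {y x : ℝ} (hf : ∀ t ∈ Ici y, HasDerivAt f (f' t) t)
    (hf' : ∀ t, y < t → 0 < f' t) (hyx : y < x) : f y < f x := by
  have hmono : StrictMonoOn f (Ici y) :=
    strictMonoOn_of_hasDerivWithinAt_pos (convex_Ici y)
      (fun t ht => (hf t ht).continuousAt.continuousWithinAt)
      (fun t ht => by rw [interior_Ici] at ht; exact (hf t (mem_Ici.2 ht.le)).hasDerivWithinAt)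
      (fun t ht => by rw [interior_Ici] at ht; exact hf' t ht)
  exact hmono self_mem_Ici hyx.le hyx

lemma sinh_lt_mul_cosh {t : ℝ} (ht : 0 < t) : sinh t < t * cosh t := by
  have hderiv (x : ℝ) : HasDerivAt (fun t => t * cosh t - sinh t) (x * sinh x) x :=
    ((hasDerivAt_id' x).mul (hasDerivAt_cosh x)).sub (hasDerivAt_sinh x) |>.congr_deriv (by ring)
  have := lt_of_hasDerivAt_pos (fun x _ => hderiv x) (fun x hx => mul_pos hx (sinh_pos_iff.2 hx)) ht
  simpa using this

lemma three_mul_sinh_mul_cosh_lt {t : ℝ} (ht : 0 < t) :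
    3 * sinh t * cosh t < t * (2 * cosh t ^ 2 + 1) := by
  have hderiv (x : ℝ) : HasDerivAt (fun t => t * (2 * cosh t ^ 2 + 1) - 3 * sinh t * cosh t)
      (4 * sinh x * (x * cosh x - sinh x)) x := by
    have h := ((hasDerivAt_id' x).mul ((((hasDerivAt_cosh x).pow 2).const_mul 2).add_const 1)).sub
      (((hasDerivAt_sinh x).const_mul 3).mul (hasDerivAt_cosh x))
    refine h.congr_deriv ?_
    have := cosh_sq x
    simp only [Pi.pow_apply]
    push_cast
    linear_combination (-1 : ℝ) * this
  have := lt_of_hasDerivAt_pos (fun x _ => hderiv x)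
    (fun x hx => mul_pos (mul_pos four_pos (sinh_pos_iff.2 hx)) (sub_pos.2 (sinh_lt_mul_cosh hx))) ht
  simpa only [cosh_zero, one_pow, mul_one, zero_mul, sinh_zero, mul_zero, sub_self, sub_pos]
    using this

lemma one_add_sq_div_two_le_cosh (x : ℝ) : 1 + x ^ 2 / 2 ≤ cosh x := by
  obtain ⟨y, hy, hxy⟩ : ∃ y, 0 ≤ y ∧ |x| = 2 * y := ⟨|x| / 2, by positivity, by ring⟩
  have h := self_le_sinh_iff.2 hy
  rw [← cosh_abs, ← sq_abs x, hxy, cosh_two_mul, cosh_sq]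
  nlinarith

lemma three_mul_mul_cosh_mul_sinh_lt {x y : ℝ} (hy : 0 < y) (hyx : y < x) :
    3 * x * cosh x * sinh y < y * sinh x * (2 * cosh x + cosh y) := by
  set c := cosh y
  have hderiv (t : ℝ) (ht : t ∈ Ici y) :
      HasDerivAt (fun t => sinh t * (2 * cosh t + c) / (t * cosh t))
        ((2 * cosh t ^ 2 * (t * cosh t - sinh t) - c * (sinh t * cosh t - t)) / (t * cosh t) ^ 2) t := by
    have ht0 : t ≠ 0 := (hy.trans_le ht).ne'
    refine ((hasDerivAt_sinh t).mul (((hasDerivAt_cosh t).const_mul 2).add_const c)).div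
      ((hasDerivAt_id' t).mul (hasDerivAt_cosh t)) (mul_ne_zero ht0 (cosh_pos t).ne') |>.congr_deriv ?_
    simp only [Pi.mul_apply]
    congr 1
    linear_combination (-c * t) * sinh_sq t
  have hpos (t : ℝ) (ht : y < t) :
      0 < (2 * cosh t ^ 2 * (t * cosh t - sinh t) - c * (sinh t * cosh t - t)) / (t * cosh t) ^ 2 := by
    have ht0 : 0 < t := hy.trans ht
    have hcosh : c ≤ cosh t := cosh_le_cosh.2 (by rw [abs_of_pos hy, abs_of_pos ht0]; exact ht.le)
    have hsinh : t < sinh t * cosh t := by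
      nlinarith [self_lt_sinh_iff.2 ht0, one_le_cosh t]
    have key := mul_pos (cosh_pos t) (sub_pos.2 (three_mul_sinh_mul_cosh_lt ht0))
    refine div_pos ?_ (by positivity)
    nlinarith [mul_nonneg (sub_nonneg.2 hcosh) (sub_nonneg.2 hsinh.le)]
  have hΦ := lt_of_hasDerivAt_pos hderiv hpos hyx
  have hc0 : 0 < c := cosh_pos y
  have hx0 : 0 < x := hy.trans hyx
  rw [div_lt_div_iff₀ (by positivity) (mul_pos hx0 (cosh_pos x))] at hΦ
  nlinarith

lemma exists_isMinOn_Ioi_of_tendsto_atTop {f : ℝ → ℝ} (hf : ContinuousOn f (Ioi 0))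
    (h0 : Tendsto f (𝓝[>] 0) atTop) (hinf : Tendsto f atTop atTop) :
    ∃ x ∈ Ioi 0, IsMinOn f (Ioi 0) x := by
  have hcont : Continuous (f ∘ exp) := hf.comp_continuous continuous_exp exp_pos
  have hlim : Tendsto (f ∘ exp) (cocompact ℝ) atTop := by
    rw [cocompact_eq_atBot_atTop]
    exact tendsto_sup.2 ⟨h0.comp tendsto_exp_atBot_nhdsGT, hinf.comp tendsto_exp_atTop⟩
  obtain ⟨t, ht⟩ := hcont.exists_forall_le hlim
  refine ⟨exp t, exp_pos t, fun x hx => ?_⟩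
  simpa [exp_log (mem_Ioi.1 hx)] using ht (log x)

lemma delta2_eq_cos (α : ℝ) : delta2 α = cos (α - π / 3) := by
  rw [delta2, cos_sub, cos_pi_div_three, sin_pi_div_three]
  ring

lemma delta3_eq_cos (α : ℝ) : delta3 α = cos (α + π / 3) := by
  rw [delta3, cos_add, cos_pi_div_three, sin_pi_div_three]
  ring

lemma gfun_pi_div_three_sub (a α l : ℝ) : gfun a (π / 3 - α) l = gfun a α l := by
  have h1 : delta1 (π / 3 - α) = delta2 α := by
    rw [delta1, delta2_eq_cos, ← cos_neg]
    congr 1; ring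
  have h2 : delta2 (π / 3 - α) = delta1 α := by
    rw [delta2_eq_cos, delta1, ← cos_neg]
    congr 1; ring
  have h3 : delta3 (π / 3 - α) = -delta3 α := by
    rw [delta3_eq_cos, delta3_eq_cos, ← cos_pi_sub]
    congr 1; ring
  simp only [gfun, h1, h2, h3, mul_neg, neg_neg]
  ring

lemma cstar_pi_div_three_sub (a α : ℝ) : cstar a (π / 3 - α) = cstar a α := by
  simp only [cstar, gfun_pi_div_three_sub]

lemma gfun_eq_cosh (a α l : ℝ) : gfun a α l =
    (cosh (l * cos α) + 2 * cosh (l * cos α / 2) * cosh (√3 * l * sin α / 2)) / 3 - 1 + a := by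
  have h1 : l * delta1 α = l * cos α := rfl
  have h2 : l * delta2 α = l * cos α / 2 + √3 * l * sin α / 2 := by rw [delta2]; ring
  have h3 : l * delta3 α = l * cos α / 2 - √3 * l * sin α / 2 := by rw [delta3]; ring
  have hcosh (x : ℝ) : exp x + exp (-x) = 2 * cosh x := by rw [cosh_eq]; ring
  simp only [gfun, h1, h2, h3, hcosh, cosh_add, cosh_sub]
  ring

lemma add_sq_div_four_le_gfun (a α l : ℝ) : a + l ^ 2 / 4 ≤ gfun a α l := by
  rw [gfun_eq_cosh]
  set u := l * cos α / 2
  set v := √3 * l * sin α / 2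
  have hu := one_add_sq_div_two_le_cosh (l * cos α)
  have huv : (1 + u ^ 2 / 2) * (1 + v ^ 2 / 2) ≤ cosh u * cosh v :=
    mul_le_mul (one_add_sq_div_two_le_cosh u) (one_add_sq_div_two_le_cosh v) (by positivity)
      (by positivity)
  have hsq : (l * cos α) ^ 2 / 2 + 2 * (u ^ 2 / 2 + v ^ 2 / 2) = 3 * l ^ 2 / 4 := by
    have := sin_sq_add_cos_sq α
    have h3 : √3 ^ 2 = 3 := sq_sqrt (by norm_num)
    simp only [u, v]
    linear_combination (3 * l ^ 2 / 4) * this + (l ^ 2 * sin α ^ 2 / 4) * h3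
  nlinarith [sq_nonneg (u * v)]

lemma hasDerivAt_gfun_angle (a l α : ℝ) : HasDerivAt (fun β => gfun a β l)
    ((-(l * sin α) * (sinh (l * cos α) + sinh (l * cos α / 2) * cosh (√3 * l * sin α / 2))
      + √3 * l * cos α * cosh (l * cos α / 2) * sinh (√3 * l * sin α / 2)) / 3) α := by
  have hc := (hasDerivAt_cos α).const_mul l
  have hs := (hasDerivAt_sin α).const_mul (√3 * l)
  simp only [gfun_eq_cosh]
  refine ((hc.cosh.add (((hc.div_const 2).cosh.const_mul 2).mul (hs.div_const 2).cosh)).div_const 3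
    |>.sub_const 1 |>.add_const a).congr_deriv ?_
  ring

lemma gfun_strictAntiOn {l : ℝ} (hl : 0 < l) (a : ℝ) :
    StrictAntiOn (fun α => gfun a α l) (Icc 0 (π / 6)) := by
  refine strictAntiOn_of_hasDerivWithinAt_neg (convex_Icc _ _)
    (fun α _ => (hasDerivAt_gfun_angle a l α).continuousAt.continuousWithinAt)
    (fun α _ => (hasDerivAt_gfun_angle a l α).hasDerivWithinAt) ?_
  intro α hα
  rw [interior_Icc] at hα
  obtain ⟨hα0, hα6⟩ := hα
  set u := l * cos α / 2
  set v := √3 * l * sin α / 2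
  have hv : 0 < v := by
    have := sin_pos_of_pos_of_lt_pi hα0 (by linarith [pi_pos])
    positivity
  have hvu : v < u := by
    have h := cos_pos_of_mem_Ioo (x := α + π / 3) ⟨by linarith [pi_pos], by linarith⟩
    rw [← delta3_eq_cos, delta3] at h
    have : u - v = l * (1 / 2 * cos α - √3 / 2 * sin α) := by ring
    linarith [mul_pos hl h]
  have h3 : √3 * √3 = 3 := mul_self_sqrt (by norm_num)
  have hcos : l * cos α = 2 * u := by ring
  have hsin : √3 * l * sin α = 2 * v := by ring
  have key : √3 * ((-(l * sin α) * (sinh (l * cos α) + sinh u * cosh v)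
      + √3 * l * cos α * cosh u * sinh v) / 3)
      = -(2 / 3) * (v * sinh u * (2 * cosh u + cosh v) - 3 * u * cosh u * sinh v) := by
    rw [hcos, sinh_two_mul]
    linear_combination (l * cos α * cosh u * sinh v / 3) * h3 + (cosh u * sinh v) * hcos
      - ((2 * sinh u * cosh u + sinh u * cosh v) / 3) * hsin
  refine neg_of_mul_neg_right ?_ (sqrt_nonneg 3)
  rw [key]
  linarith [three_mul_mul_cosh_mul_sinh_lt hv hvu]

lemma isLeast_cstar {a : ℝ} (ha : 0 < a) (α : ℝ) :
    IsLeast {c : ℝ | ∃ l : ℝ, 0 < l ∧ c = gfun a α l / l} (cstar a α) := by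
  have hbound {l : ℝ} (hl : 0 < l) : a / l + l / 4 ≤ gfun a α l / l := by
    calc a / l + l / 4 = (a + l ^ 2 / 4) / l := by field_simp
      _ ≤ gfun a α l / l := by gcongr; exact add_sq_div_four_le_gfun a α l
  have hg : Continuous fun l => gfun a α l := by unfold gfun; fun_prop
  have hcont : ContinuousOn (fun l => gfun a α l / l) (Ioi 0) :=
    hg.continuousOn.div continuousOn_id fun l hl => (mem_Ioi.1 hl).ne'
  have h0 : Tendsto (fun l => gfun a α l / l) (𝓝[>] 0) atTop := by
    refine tendsto_atTop_mono' _ ?_ (tendsto_inv_nhdsGT_zero.const_mul_atTop ha)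
    filter_upwards [self_mem_nhdsWithin] with l (hl : 0 < l)
    linarith [hbound hl, div_eq_mul_inv a l, (by positivity : 0 ≤ l / 4)]
  have hinf : Tendsto (fun l => gfun a α l / l) atTop atTop := by
    refine tendsto_atTop_mono' _ ?_ (tendsto_id.atTop_div_const (by norm_num : (0 : ℝ) < 4))
    filter_upwards [eventually_gt_atTop 0] with l hl
    rw [id]
    linarith [hbound hl, (by positivity : 0 ≤ a / l)]
  obtain ⟨l₀, hl₀, hmin⟩ := exists_isMinOn_Ioi_of_tendsto_atTop hcont h0 hinf
  have hleast : IsLeast {c : ℝ | ∃ l : ℝ, 0 < l ∧ c = gfun a α l / l} (gfun a α l₀ / l₀) :=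
    ⟨⟨l₀, hl₀, rfl⟩, by rintro _ ⟨l, hl, rfl⟩; exact hmin hl⟩
  rwa [cstar, hleast.csInf_eq]

lemma cstar_strictAntiOn {a : ℝ} (ha : 0 < a) : StrictAntiOn (cstar a) (Icc 0 (π / 6)) := by
  intro α₁ h₁ α₂ h₂ h12
  obtain ⟨⟨l, hl, hval⟩, -⟩ := isLeast_cstar ha α₁
  calc cstar a α₂ ≤ gfun a α₂ l / l := (isLeast_cstar ha α₂).2 ⟨l, hl, rfl⟩
    _ < gfun a α₁ l / l := div_lt_div_of_pos_right (gfun_strictAntiOn hl a h₁ h₂ h12) hl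
    _ = cstar a α₁ := hval.symm

lemma cstar_strictMonoOn {a : ℝ} (ha : 0 < a) : StrictMonoOn (cstar a) (Icc (π / 6) (π / 3)) := by
  intro α₁ h₁ α₂ h₂ h12
  rw [← cstar_pi_div_three_sub a α₁, ← cstar_pi_div_three_sub a α₂]
  exact cstar_strictAntiOn ha ⟨by linarith [h₂.2], by linarith [h₂.1]⟩
    ⟨by linarith [h₁.2], by linarith [h₁.1]⟩ (by linarith)

theorem stmt8 (a : ℝ) (ha : 0 < a) :
    (∀ α₁ α₂ : ℝ, 0 ≤ α₁ → α₁ < α₂ → α₂ ≤ Real.pi / 6 → cstar a α₂ < cstar a α₁) ∧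
    (∀ α₁ α₂ : ℝ, Real.pi / 6 ≤ α₁ → α₁ < α₂ → α₂ ≤ Real.pi / 3 → cstar a α₁ < cstar a α₂) :=
  ⟨fun _ _ h₀ h12 h₂ => cstar_strictAntiOn ha ⟨h₀, h12.le.trans h₂⟩ ⟨h₀.trans h12.le, h₂⟩ h12,
    fun _ _ h₁ h12 h₂ => cstar_strictMonoOn ha ⟨h₁, h12.le.trans h₂⟩ ⟨h₁.trans h12.le, h₂⟩ h12⟩
end
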